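/- Let X be a Banach space, t ↦ L_t an L-Lipschitz map from [0,1] into B(X) with ‖e^{r L_s}‖ ≤ 1 for all r ≥ 0 and s ∈ [0,1], and T_{[t,s]} a propagator for (L_t). Then for every m ≥ 1, ‖T_{[1,0]} − ∏_{j=1}^{m} e^{(1/m) L_{j/m}}‖ ≤ 3L/(2m), where the product is time-ordered; in particular the time-ordered exponential products converge in operator norm to T_{[1,0]} as m → ∞. -/

import Mathlib

/-!
On a step `[s, t]` the map `u ↦ T_{[t,u]} e^{(u-s) L_t}` runs from `T_{[t,s]}` to
`e^{(t-s) L_t}`, and its derivative `T_{[t,u]} (L_t - L_u) e^{(u-s) L_t}` has norm at most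
`L (t - s)`, the outer factors being contractions. By the mean value inequality each step of
length `1/m` has local error at most `L/m²`, and since all factors of the time-ordered products
are contractions the local errors simply add up (Lady Windermere's fan), to at most `L/m`.
-/

/-- The time-ordered product `f m * f (m-1) * ⋯ * f 1` of operators
(composition in the order of increasing index, later times acting last). -/
noncomputable def timeOrderedProd {X : Type*} [NormedAddCommGroup X] [NormedSpace ℝ X]
    (f : ℕ → X →L[ℝ] X) : ℕ → X →L[ℝ] X
  | 0 => 1
  | n + 1 => f (n + 1) * timeOrderedProd f n

open Set

section Duhamel

variable {𝔸 : Type*} [NormedRing 𝔸] [NormedAlgebra ℝ 𝔸] [CompleteSpace 𝔸]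

theorem hasDerivAt_exp_sub_smul (B : 𝔸) (s u : ℝ) :
    HasDerivAt (fun v : ℝ => NormedSpace.exp ((v - s) • B)) (B * NormedSpace.exp ((u - s) • B))
      u := by
  simpa [Function.comp_def] using
    (hasDerivAt_exp_smul_const' (𝕂 := ℝ) B (u - s)).scomp u ((hasDerivAt_id u).sub_const s)

/-- `U` plays the role of `u ↦ T_{[t,u]}`. -/
theorem norm_sub_exp_smul_le_of_hasDerivWithinAt {U A : ℝ → 𝔸} {s t δ : ℝ} (hst : s ≤ t)
    (hU : ∀ u ∈ Icc s t, HasDerivWithinAt U (-(U u * A u)) (Icc s t) u)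
    (hUt : U t = 1) (hUnorm : ∀ u ∈ Icc s t, ‖U u‖ ≤ 1)
    (hA : ∀ u ∈ Icc s t, ‖A t - A u‖ ≤ δ)
    (hexp : ∀ r ∈ Icc 0 (t - s), ‖NormedSpace.exp (r • A t)‖ ≤ 1) :
    ‖U s - NormedSpace.exp ((t - s) • A t)‖ ≤ δ * (t - s) := by
  set g : ℝ → 𝔸 := fun u => NormedSpace.exp ((u - s) • A t)
  have hderiv : ∀ u ∈ Icc s t,
      HasDerivWithinAt (fun u => U u * g u) (U u * ((A t - A u) * g u)) (Icc s t) u := by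
    intro u hu
    refine ((hU u hu).mul (hasDerivAt_exp_sub_smul (A t) s u).hasDerivWithinAt).congr_deriv ?_
    simp only [g]
    noncomm_ring
  have hbound : ∀ u ∈ Icc s t, ‖U u * ((A t - A u) * g u)‖ ≤ δ := by
    intro u hu
    have hg : ‖g u‖ ≤ 1 := hexp (u - s) ⟨by linarith [hu.1], by linarith [hu.2]⟩
    calc ‖U u * ((A t - A u) * g u)‖ ≤ ‖U u‖ * (‖A t - A u‖ * ‖g u‖) :=
          (norm_mul_le _ _).trans (by gcongr; exact norm_mul_le _ _)
      _ ≤ 1 * (δ * 1) := by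
          have hδ : 0 ≤ δ := (norm_nonneg _).trans (hA u hu)
          gcongr
          exacts [hUnorm u hu, hA u hu]
      _ = δ := by ring
  have hmvt := Convex.norm_image_sub_le_of_norm_hasDerivWithin_le hderiv hbound
    (convex_Icc s t) (left_mem_Icc.2 hst) (right_mem_Icc.2 hst)
  simpa [g, hUt, norm_sub_rev, abs_of_nonpos (sub_nonpos.2 hst)] using hmvt

end Duhamel

section TimeOrderedProd

variable {X : Type*} [NormedAddCommGroup X] [NormedSpace ℝ X]

theorem norm_timeOrderedProd_le_one {f : ℕ → X →L[ℝ] X} {n : ℕ}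
    (hf : ∀ j < n, ‖f (j + 1)‖ ≤ 1) : ‖timeOrderedProd f n‖ ≤ 1 := by
  induction n with
  | zero => exact ContinuousLinearMap.norm_id_le
  | succ n ih =>
    calc ‖f (n + 1) * timeOrderedProd f n‖ ≤ ‖f (n + 1)‖ * ‖timeOrderedProd f n‖ :=
          norm_mul_le _ _
      _ ≤ 1 * 1 := by
          gcongr
          exacts [hf n n.lt_succ_self, ih fun j hj => hf j (hj.trans n.lt_succ_self)]
      _ = 1 := one_mul 1

theorem norm_propagator_sub_timeOrderedProd_le {T : ℝ → ℝ → X →L[ℝ] X} {f : ℕ → X →L[ℝ] X}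
    {τ : ℕ → ℝ} {n : ℕ} {ε : ℝ} (hτ : Monotone τ) (hτ0 : 0 ≤ τ 0) (hτn : τ n ≤ 1)
    (hTnorm : ∀ s t : ℝ, 0 ≤ s → s ≤ t → t ≤ 1 → ‖T t s‖ ≤ 1) (hTid : T (τ 0) (τ 0) = 1)
    (hTcomp : ∀ s r t : ℝ, 0 ≤ s → s ≤ r → r ≤ t → t ≤ 1 → T t r * T r s = T t s)
    (hf : ∀ j < n, ‖f (j + 1)‖ ≤ 1) (hloc : ∀ j < n, ‖T (τ (j + 1)) (τ j) - f (j + 1)‖ ≤ ε) :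
    ‖T (τ n) (τ 0) - timeOrderedProd f n‖ ≤ n * ε := by
  induction n with
  | zero => simp [timeOrderedProd, hTid]
  | succ n ih =>
    have hlt : ∀ j < n, j < n + 1 := fun j hj => hj.trans n.lt_succ_self
    have hτn' : τ n ≤ τ (n + 1) := hτ n.le_succ
    have hτ0n : τ 0 ≤ τ n := hτ n.zero_le
    set S := T (τ (n + 1)) (τ n)
    set P := timeOrderedProd f n
    have hsplit : T (τ (n + 1)) (τ 0) - f (n + 1) * P =
        S * (T (τ n) (τ 0) - P) + (S - f (n + 1)) * P := by
      rw [← hTcomp _ _ _ hτ0 hτ0n hτn' hτn, mul_sub, sub_mul]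
      abel
    calc ‖T (τ (n + 1)) (τ 0) - timeOrderedProd f (n + 1)‖
        = ‖S * (T (τ n) (τ 0) - P) + (S - f (n + 1)) * P‖ := congrArg norm hsplit
      _ ≤ ‖S‖ * ‖T (τ n) (τ 0) - P‖ + ‖S - f (n + 1)‖ * ‖P‖ :=
          (norm_add_le _ _).trans (add_le_add (norm_mul_le _ _) (norm_mul_le _ _))
      _ ≤ 1 * (n * ε) + ε * 1 := by
          have hε : 0 ≤ ε := (norm_nonneg _).trans (hloc n n.lt_succ_self)
          gcongr
          · exact hTnorm _ _ (hτ0.trans hτ0n) hτn' hτn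
          · exact ih (hτn'.trans hτn) (fun j hj => hf j (hlt j hj)) fun j hj => hloc j (hlt j hj)
          · exact hloc n n.lt_succ_self
          · exact norm_timeOrderedProd_le_one fun j hj => hf j (hlt j hj)
      _ = (n + 1 : ℕ) * ε := by push_cast; ring

end TimeOrderedProd

theorem nonneg_of_norm_sub_le_mul_abs_sub {E : Type*} [SeminormedAddCommGroup E] {A : ℝ → E}
    {L : ℝ} (hLip : ∀ t ∈ Icc (0 : ℝ) 1, ∀ s ∈ Icc (0 : ℝ) 1, ‖A t - A s‖ ≤ L * |t - s|) :
    0 ≤ L := by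
  simpa using (norm_nonneg _).trans (hLip 1 (right_mem_Icc.2 zero_le_one) 0
    (left_mem_Icc.2 zero_le_one))

section Propagator

variable {X : Type*} [NormedAddCommGroup X] [NormedSpace ℝ X] [CompleteSpace X]
  {L : ℝ} {A : ℝ → X →L[ℝ] X} {T : ℝ → ℝ → X →L[ℝ] X}

theorem norm_propagator_sub_exp_le
    (hLip : ∀ t ∈ Icc (0 : ℝ) 1, ∀ s ∈ Icc (0 : ℝ) 1, ‖A t - A s‖ ≤ L * |t - s|)
    (hcontr : ∀ s ∈ Icc (0 : ℝ) 1, ∀ r : ℝ, 0 ≤ r → ‖NormedSpace.exp (r • A s)‖ ≤ 1)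
    (hTnorm : ∀ s t : ℝ, 0 ≤ s → s ≤ t → t ≤ 1 → ‖T t s‖ ≤ 1)
    (hTid : ∀ t ∈ Icc (0 : ℝ) 1, T t t = 1)
    (hTderiv : ∀ t ∈ Icc (0 : ℝ) 1, ∀ s ∈ Icc (0 : ℝ) t,
      HasDerivWithinAt (fun u => T t u) (-(T t s * A s)) (Icc (0 : ℝ) t) s)
    {s t : ℝ} (hs : 0 ≤ s) (hst : s ≤ t) (ht : t ≤ 1) :
    ‖T t s - NormedSpace.exp ((t - s) • A t)‖ ≤ L * (t - s) * (t - s) := by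
  have ht01 : t ∈ Icc (0 : ℝ) 1 := ⟨hs.trans hst, ht⟩
  refine norm_sub_exp_smul_le_of_hasDerivWithinAt hst
    (fun u hu => (hTderiv t ht01 u ⟨hs.trans hu.1, hu.2⟩).mono (Icc_subset_Icc hs le_rfl))
    (hTid t ht01) (fun u hu => hTnorm u t (hs.trans hu.1) hu.2 ht) (fun u hu => ?_)
    (fun r hr => hcontr t ht01 r hr.1)
  calc ‖A t - A u‖ ≤ L * |t - u| := hLip t ht01 u ⟨hs.trans hu.1, hu.2.trans ht⟩
    _ ≤ L * (t - s) := by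
        have hL := nonneg_of_norm_sub_le_mul_abs_sub hLip
        rw [abs_of_nonneg (sub_nonneg.2 hu.2)]
        gcongr
        exact hu.1

theorem norm_propagator_sub_timeOrderedProd_exp_le
    (hLip : ∀ t ∈ Icc (0 : ℝ) 1, ∀ s ∈ Icc (0 : ℝ) 1, ‖A t - A s‖ ≤ L * |t - s|)
    (hcontr : ∀ s ∈ Icc (0 : ℝ) 1, ∀ r : ℝ, 0 ≤ r → ‖NormedSpace.exp (r • A s)‖ ≤ 1)
    (hTnorm : ∀ s t : ℝ, 0 ≤ s → s ≤ t → t ≤ 1 → ‖T t s‖ ≤ 1)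
    (hTid : ∀ t ∈ Icc (0 : ℝ) 1, T t t = 1)
    (hTcomp : ∀ s r t : ℝ, 0 ≤ s → s ≤ r → r ≤ t → t ≤ 1 → T t r * T r s = T t s)
    (hTderiv : ∀ t ∈ Icc (0 : ℝ) 1, ∀ s ∈ Icc (0 : ℝ) t,
      HasDerivWithinAt (fun u => T t u) (-(T t s * A s)) (Icc (0 : ℝ) t) s)
    {m : ℕ} (hm : 1 ≤ m) :
    ‖T 1 0 - timeOrderedProd (fun j => NormedSpace.exp ((m : ℝ)⁻¹ • A ((j : ℝ) / m))) m‖ ≤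
      L / m := by
  have hm0 : (0 : ℝ) < m := by exact_mod_cast hm
  set τ : ℕ → ℝ := fun j => (j : ℝ) / m
  have hτ : Monotone τ := fun i j hij => by dsimp [τ]; gcongr
  have hτ0 : τ 0 = 0 := by simp [τ]
  have hτm : τ m = 1 := div_self hm0.ne'
  have hτle : ∀ j ≤ m, τ j ≤ 1 := fun j hj => hτm ▸ hτ hj
  have hτstep : ∀ j, τ (j + 1) - τ j = (m : ℝ)⁻¹ := fun j => by
    simp only [τ]; push_cast; field_simp; ring
  have hτnn : ∀ j, 0 ≤ τ j := fun j => by positivity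
  have hexp : ∀ j ≤ m, ‖NormedSpace.exp ((m : ℝ)⁻¹ • A (τ j))‖ ≤ 1 := fun j hj =>
    hcontr _ ⟨hτnn j, hτle j hj⟩ _ (by positivity)
  have hloc : ∀ j < m, ‖T (τ (j + 1)) (τ j) - NormedSpace.exp ((m : ℝ)⁻¹ • A (τ (j + 1)))‖ ≤
      L * (m : ℝ)⁻¹ * (m : ℝ)⁻¹ := fun j hj => by
    simpa only [hτstep] using norm_propagator_sub_exp_le hLip hcontr hTnorm hTid hTderiv
      (hτnn j) (hτ j.le_succ) (hτle _ hj)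
  have hfan := norm_propagator_sub_timeOrderedProd_le
    (f := fun j => NormedSpace.exp ((m : ℝ)⁻¹ • A (τ j))) hτ (hτnn 0) (hτle m le_rfl) hTnorm
    (hTid _ ⟨hτnn 0, hτle 0 m.zero_le⟩) hTcomp (fun j hj => hexp (j + 1) hj) hloc
  rw [hτm, hτ0] at hfan
  exact hfan.trans_eq (by field_simp)

end Propagator

/-- **Product-formula approximation of the propagator.**
For an `L`-Lipschitz family of generators of contraction semigroups on `[0,1]` with propagator
`T`, `‖T_{[1,0]} − ∏_{j=1}^m e^{L_{j/m}/m}‖ ≤ 3L/(2m)` for every `m ≥ 1`; in particular the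
time-ordered exponential products converge to `T_{[1,0]}` in operator norm. -/
theorem propagator_product_formula
    {X : Type*} [NormedAddCommGroup X] [NormedSpace ℝ X] [CompleteSpace X]
    (L : ℝ) (A : ℝ → X →L[ℝ] X)
    (hLip : ∀ t ∈ Set.Icc (0 : ℝ) 1, ∀ s ∈ Set.Icc (0 : ℝ) 1, ‖A t - A s‖ ≤ L * |t - s|)
    (hcontr : ∀ s ∈ Set.Icc (0 : ℝ) 1, ∀ r : ℝ, 0 ≤ r → ‖NormedSpace.exp (r • A s)‖ ≤ 1)
    (T : ℝ → ℝ → X →L[ℝ] X)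
    (hTnorm : ∀ s t : ℝ, 0 ≤ s → s ≤ t → t ≤ 1 → ‖T t s‖ ≤ 1)
    (hTid : ∀ t ∈ Set.Icc (0 : ℝ) 1, T t t = 1)
    (hTcomp : ∀ s r t : ℝ, 0 ≤ s → s ≤ r → r ≤ t → t ≤ 1 → T t r * T r s = T t s)
    (hTderiv : ∀ t ∈ Set.Icc (0 : ℝ) 1, ∀ s ∈ Set.Icc (0 : ℝ) t,
      HasDerivWithinAt (fun u => T t u) (-(T t s * A s)) (Set.Icc (0 : ℝ) t) s) :
    (∀ m : ℕ, 1 ≤ m →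
      ‖T 1 0 - timeOrderedProd (fun j => NormedSpace.exp ((m : ℝ)⁻¹ • A ((j : ℝ) / m))) m‖ ≤
        3 * L / (2 * m)) ∧
    Filter.Tendsto
      (fun m : ℕ =>
        ‖T 1 0 - timeOrderedProd (fun j => NormedSpace.exp ((m : ℝ)⁻¹ • A ((j : ℝ) / m))) m‖)
      Filter.atTop (nhds 0) := by
  have hL := nonneg_of_norm_sub_le_mul_abs_sub hLip
  have hbound := fun m (hm : 1 ≤ m) => norm_propagator_sub_timeOrderedProd_exp_le hLip hcontr
    hTnorm hTid hTcomp hTderiv (m := m) hm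
  refine ⟨fun m hm => (hbound m hm).trans ?_, ?_⟩
  · have hm0 : (0 : ℝ) < m := by exact_mod_cast hm
    rw [div_le_div_iff₀ hm0 (by positivity)]
    nlinarith
  · refine squeeze_zero' (.of_forall fun m => norm_nonneg _) ?_
      (tendsto_const_div_atTop_nhds_zero_nat L)
    filter_upwards [Filter.eventually_ge_atTop 1] with m hm using hbound m hm
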